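/- arXiv:1908.08981 — 10 statements merged into one kernel-verified Lean document; each statement's English description precedes it below -/
import Mathlib

section
/- Let Θ be the trial-to-test operator for a bounded bilinear form b on U × V. If b satisfies the inf-sup condition with constant γ > 0, then the bilinear form (u, w) ↦ b(u, Θw) is symmetric, bounded by M² (i.e. |b(u, Θw)| ≤ M²·‖u‖_U·‖w‖_U for all u, w ∈ U), and coercive on U: b(u, Θu) ≥ γ²·‖u‖_U² for all u ∈ U. -/
/-!
`b(u, Θw) = ⟪Θu, Θw⟫`, so the form is the inner product of `V` pulled back along `Θ`: it is
symmetric, and both bounds follow from `γ‖u‖ ≤ ‖Θu‖ ≤ |M|‖u‖`. The lower estimate is the inf-sup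
condition combined with `b(u, v) = ⟪Θu, v⟫ ≤ ‖Θu‖‖v‖`; the upper one comes from testing with
`v = Θu`, which gives `‖Θu‖² = b(u, Θu) ≤ M‖u‖‖Θu‖`.
-/

open scoped InnerProductSpace

namespace TrialToTest

variable {U V : Type*} [NormedAddCommGroup V] [InnerProductSpace ℝ V] {b : U → V → ℝ} {Θ : U → V}

theorem apply_eq_inner (hΘ : ∀ u v, ⟪Θ u, v⟫_ℝ = b u v) (u w : U) :
    b u (Θ w) = ⟪Θ u, Θ w⟫_ℝ :=
  (hΘ u (Θ w)).symm

theorem apply_comm (hΘ : ∀ u v, ⟪Θ u, v⟫_ℝ = b u v) (u w : U) : b u (Θ w) = b w (Θ u) := by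
  rw [apply_eq_inner hΘ, apply_eq_inner hΘ, real_inner_comm]

theorem apply_self (hΘ : ∀ u v, ⟪Θ u, v⟫_ℝ = b u v) (u : U) : b u (Θ u) = ‖Θ u‖ ^ 2 := by
  rw [apply_eq_inner hΘ, real_inner_self_eq_norm_sq]

theorem norm_le [SeminormedAddCommGroup U] (hΘ : ∀ u v, ⟪Θ u, v⟫_ℝ = b u v) {M : ℝ}
    (hM : ∀ u v, |b u v| ≤ M * ‖u‖ * ‖v‖) (u : U) : ‖Θ u‖ ≤ |M| * ‖u‖ := by
  have key : ‖Θ u‖ * ‖Θ u‖ ≤ |M| * ‖u‖ * ‖Θ u‖ :=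
    calc ‖Θ u‖ * ‖Θ u‖ = b u (Θ u) := by rw [apply_self hΘ, sq]
      _ ≤ M * ‖u‖ * ‖Θ u‖ := (le_abs_self _).trans (hM u (Θ u))
      _ ≤ |M| * ‖u‖ * ‖Θ u‖ := by gcongr; exact le_abs_self M
  rcases (norm_nonneg (Θ u)).eq_or_lt with hzero | hpos
  · rw [← hzero]
    positivity
  · exact le_of_mul_le_mul_right key hpos

theorem abs_apply_le [SeminormedAddCommGroup U] (hΘ : ∀ u v, ⟪Θ u, v⟫_ℝ = b u v) {M : ℝ}
    (hM : ∀ u v, |b u v| ≤ M * ‖u‖ * ‖v‖) (u w : U) : |b u (Θ w)| ≤ M ^ 2 * ‖u‖ * ‖w‖ :=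
  calc |b u (Θ w)| = |⟪Θ u, Θ w⟫_ℝ| := by rw [apply_eq_inner hΘ]
    _ ≤ ‖Θ u‖ * ‖Θ w‖ := abs_real_inner_le_norm _ _
    _ ≤ (|M| * ‖u‖) * (|M| * ‖w‖) :=
      mul_le_mul (norm_le hΘ hM u) (norm_le hΘ hM w) (norm_nonneg _) (by positivity)
    _ = M ^ 2 * ‖u‖ * ‖w‖ := by rw [mul_mul_mul_comm, abs_mul_abs_self]; ring

theorem le_norm_of_le_iSup_div_norm (hΘ : ∀ u v, ⟪Θ u, v⟫_ℝ = b u v) {u : U} {c : ℝ}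
    (h : c ≤ ⨆ v : {v : V // v ≠ 0}, b u v.1 / ‖v.1‖) : c ≤ ‖Θ u‖ := by
  refine h.trans (Real.iSup_le ?_ (norm_nonneg _))
  rintro ⟨v, hv⟩
  rw [div_le_iff₀ (norm_pos_iff.mpr hv), ← hΘ u v]
  exact (le_abs_self _).trans (abs_real_inner_le_norm _ _)

theorem sq_mul_sq_le_apply_self [SeminormedAddCommGroup U] (hΘ : ∀ u v, ⟪Θ u, v⟫_ℝ = b u v)
    {u : U} {γ : ℝ} (hγ : 0 ≤ γ)
    (h : γ * ‖u‖ ≤ ⨆ v : {v : V // v ≠ 0}, b u v.1 / ‖v.1‖) :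
    γ ^ 2 * ‖u‖ ^ 2 ≤ b u (Θ u) := by
  rw [apply_self hΘ, ← mul_pow]
  exact pow_le_pow_left₀ (by positivity) (le_norm_of_le_iSup_div_norm hΘ h) 2

end TrialToTest

open TrialToTest in
theorem statement1_general
    {U V : Type*} [NormedAddCommGroup U] [InnerProductSpace ℝ U]
    [NormedAddCommGroup V] [InnerProductSpace ℝ V]
    (b : U →L[ℝ] V →L[ℝ] ℝ) (M γ : ℝ)
    (hM : ∀ (u : U) (v : V), |b u v| ≤ M * ‖u‖ * ‖v‖)
    (hγ : 0 < γ)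
    (hinfsup : ∀ u : U, γ * ‖u‖ ≤ ⨆ v : {v : V // v ≠ 0}, b u v.1 / ‖v.1‖)
    (Θ : U → V) (hΘ : ∀ (u : U) (v : V), ⟪Θ u, v⟫_ℝ = b u v) :
    (∀ u w : U, b u (Θ w) = b w (Θ u)) ∧
    (∀ u w : U, |b u (Θ w)| ≤ M ^ 2 * ‖u‖ * ‖w‖) ∧
    (∀ u : U, γ ^ 2 * ‖u‖ ^ 2 ≤ b u (Θ u)) :=
  ⟨apply_comm hΘ, abs_apply_le hΘ hM, fun u => sq_mul_sq_le_apply_self hΘ hγ.le (hinfsup u)⟩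

/-- under the inf-sup condition, the form `(u,w) ↦ b(u, Θw)` is
symmetric, bounded by `M²` and coercive with constant `γ²`. -/
theorem statement1
    {U V : Type*} [NormedAddCommGroup U] [InnerProductSpace ℝ U] [CompleteSpace U]
    [NormedAddCommGroup V] [InnerProductSpace ℝ V] [CompleteSpace V]
    (b : U →L[ℝ] V →L[ℝ] ℝ) (M γ : ℝ)
    (hM : ∀ (u : U) (v : V), |b u v| ≤ M * ‖u‖ * ‖v‖)
    (hγ : 0 < γ)
    (hinfsup : ∀ u : U, γ * ‖u‖ ≤ ⨆ v : {v : V // v ≠ 0}, b u v.1 / ‖v.1‖)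
    (Θ : U → V) (hΘ : ∀ (u : U) (v : V), ⟪Θ u, v⟫_ℝ = b u v) :
    (∀ u w : U, b u (Θ w) = b w (Θ u)) ∧
    (∀ u w : U, |b u (Θ w)| ≤ M ^ 2 * ‖u‖ * ‖w‖) ∧
    (∀ u : U, γ ^ 2 * ‖u‖ ^ 2 ≤ b u (Θ u)) :=
  statement1_general b M γ hM hγ hinfsup Θ hΘ
end

section
/- (Ideal DPG quasi-optimality.) Assume b is bounded with constant M and satisfies the inf-sup condition with constant γ > 0. Let F ∈ V' and let u ∈ U satisfy b(u, v) = F(v) for all v ∈ V. Let U_h ⊆ U be a finite-dimensional subspace. Then there exists a unique u_h ∈ U_h such that b(u_h, Θw_h) = F(Θw_h) for all w_h ∈ U_h, and it satisfies the quasi-optimal error estimate ‖u − u_h‖_U ≤ (M/γ)·inf_{w_h ∈ U_h} ‖u − w_h‖_U. -/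
/-!
The trial-to-test operator `Θ` is linear, and boundedness and the inf-sup condition give
`γ ‖x‖ ≤ ‖Θ x‖ ≤ M ‖x‖`. Since `b x (Θ w) = ⟪Θ x, Θ w⟫` and `F (Θ w) = ⟪Θ u, Θ w⟫`, the discrete
equations say exactly that `Θ uₕ` is the orthogonal projection of `Θ u` onto `Θ(Uₕ)`. As `Θ` is
injective this determines `uₕ`, and the best-approximation property of the projection gives
`γ ‖u - uₕ‖ ≤ ‖Θ (u - uₕ)‖ ≤ ‖Θ (u - wₕ)‖ ≤ M ‖u - wₕ‖`.
-/

open scoped InnerProductSpace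

theorem le_div_mul_iInf_of_forall_mul_le {ι : Type*} {f : ι → ℝ} {γ M : ℝ} (hγ : 0 < γ)
    (hf : ∀ i, 0 ≤ f i) (i₀ : ι) (h : ∀ i, γ * f i₀ ≤ M * f i) : f i₀ ≤ M / γ * ⨅ i, f i := by
  have : Nonempty ι := ⟨i₀⟩
  rcases (hf i₀).eq_or_lt with h0 | hpos
  · have hbdd : BddBelow (Set.range f) := ⟨0, Set.forall_mem_range.mpr hf⟩
    have hinf : ⨅ i, f i = 0 := le_antisymm (h0 ▸ ciInf_le hbdd i₀) (le_ciInf hf)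
    rw [← h0, hinf, mul_zero]
  · -- `γ f i₀ ≤ M f i₀` with `f i₀ > 0` forces `γ ≤ M`.
    have hMγ : 0 ≤ M / γ := div_nonneg (by nlinarith [h i₀]) hγ.le
    rw [Real.mul_iInf_of_nonneg hMγ]
    refine le_ciInf fun i => ?_
    rw [div_mul_eq_mul_div, le_div_iff₀ hγ, mul_comm]
    exact h i

section

variable {U V : Type*} [NormedAddCommGroup U] [InnerProductSpace ℝ U]
  [NormedAddCommGroup V] [InnerProductSpace ℝ V]

theorem isLinearMap_of_forall_inner_eq {b : U →L[ℝ] V →L[ℝ] ℝ} {Θ : U → V}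
    (hΘ : ∀ u v, ⟪Θ u, v⟫_ℝ = b u v) : IsLinearMap ℝ Θ where
  map_add x y := ext_inner_right ℝ fun v => by simp [hΘ, inner_add_left]
  map_smul c x := ext_inner_right ℝ fun v => by simp [hΘ, inner_smul_left]

theorem iSup_inner_div_norm_le (w : V) : ⨆ v : {v : V // v ≠ 0}, ⟪w, v.1⟫_ℝ / ‖v.1‖ ≤ ‖w‖ :=
  Real.iSup_le (fun _ => div_le_of_le_mul₀ (norm_nonneg _) (norm_nonneg _) (real_inner_le_norm _ _))
    (norm_nonneg w)

theorem LinearMap.injective_of_mul_norm_le {γ : ℝ} (hγ : 0 < γ) {T : U →ₗ[ℝ] V}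
    (h : ∀ x, γ * ‖x‖ ≤ ‖T x‖) : Function.Injective T := by
  refine (injective_iff_map_eq_zero T).mpr fun x hx => norm_le_zero_iff.mp ?_
  have := h x
  rw [hx, norm_zero] at this
  exact nonpos_of_mul_nonpos_right this hγ

theorem norm_le_of_forall_abs_inner_le {b : U →L[ℝ] V →L[ℝ] ℝ} {M : ℝ} {T : U →ₗ[ℝ] V}
    (hM : ∀ u v, |b u v| ≤ M * ‖u‖ * ‖v‖) (hT : ∀ u v, ⟪T u, v⟫_ℝ = b u v)
    (hinj : Function.Injective T) (x : U) : ‖T x‖ ≤ M * ‖x‖ := by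
  rcases eq_or_ne x 0 with rfl | hx
  · simp
  have hTx : 0 < ‖T x‖ := norm_pos_iff.mpr ((map_ne_zero_iff T hinj).mpr hx)
  refine le_of_mul_le_mul_right ?_ hTx
  calc ‖T x‖ * ‖T x‖ = b x (T x) := by rw [← hT, real_inner_self_eq_norm_mul_norm]
    _ ≤ |b x (T x)| := le_abs_self _
    _ ≤ M * ‖x‖ * ‖T x‖ := hM x (T x)

variable {T : U →ₗ[ℝ] V} {Uh : Submodule ℝ U} [(Uh.map T).HasOrthogonalProjection]

theorem map_eq_starProjection_iff {u x : U} (hx : x ∈ Uh) :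
    T x = (Uh.map T).starProjection (T u) ↔ ∀ w ∈ Uh, ⟪T u - T x, T w⟫_ℝ = 0 := by
  constructor
  · rintro h w hw
    rw [h]
    exact Submodule.starProjection_inner_eq_zero _ _ (Submodule.mem_map_of_mem hw)
  · intro h
    refine (Submodule.eq_starProjection_of_mem_of_inner_eq_zero
      (Submodule.mem_map_of_mem hx) ?_).symm
    rintro _ ⟨w, hw, rfl⟩
    exact h w hw

theorem existsUnique_map_eq_starProjection (hT : Function.Injective T) (v : V) :
    ∃! x : Uh, T x = (Uh.map T).starProjection v := by
  obtain ⟨x, hx, hTx⟩ := Submodule.mem_map.mp ((Uh.map T).starProjection_apply_mem v)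
  exact ⟨⟨x, hx⟩, hTx, fun y hy => Subtype.ext (hT (hy.trans hTx.symm))⟩

theorem norm_sub_map_le_of_eq_starProjection {u x w : U}
    (hx : T x = (Uh.map T).starProjection (T u)) (hw : w ∈ Uh) : ‖T u - T x‖ ≤ ‖T u - T w‖ := by
  rw [hx, Submodule.starProjection_minimal]
  have hbdd : BddBelow (Set.range fun y : Uh.map T => ‖T u - y‖) :=
    ⟨0, Set.forall_mem_range.mpr fun _ => norm_nonneg _⟩
  exact ciInf_le hbdd ⟨T w, Submodule.mem_map_of_mem hw⟩

end

theorem statement2_general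
    {U V : Type*} [NormedAddCommGroup U] [InnerProductSpace ℝ U]
    [NormedAddCommGroup V] [InnerProductSpace ℝ V]
    (b : U →L[ℝ] V →L[ℝ] ℝ) (M γ : ℝ)
    (hM : ∀ (u : U) (v : V), |b u v| ≤ M * ‖u‖ * ‖v‖)
    (hγ : 0 < γ)
    (hinfsup : ∀ u : U, γ * ‖u‖ ≤ ⨆ v : {v : V // v ≠ 0}, b u v.1 / ‖v.1‖)
    (Θ : U → V) (hΘ : ∀ (u : U) (v : V), ⟪Θ u, v⟫_ℝ = b u v)
    (F : V →L[ℝ] ℝ) (u : U) (hu : ∀ v : V, b u v = F v)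
    (Uh : Submodule ℝ U) [FiniteDimensional ℝ Uh] :
    (∃! uh : Uh, ∀ wh : Uh, b uh (Θ wh) = F (Θ wh)) ∧
    (∀ uh : Uh, (∀ wh : Uh, b uh (Θ wh) = F (Θ wh)) →
      ‖u - uh‖ ≤ M / γ * ⨅ wh : Uh, ‖u - (wh : U)‖) := by
  set T : U →ₗ[ℝ] V := IsLinearMap.mk' Θ (isLinearMap_of_forall_inner_eq hΘ)
  have hTΘ : ⇑T = Θ := rfl
  have hT : ∀ x v, ⟪T x, v⟫_ℝ = b x v := hΘ
  have hlow : ∀ x, γ * ‖x‖ ≤ ‖T x‖ := fun x =>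
    (hinfsup x).trans (by simpa only [hT] using iSup_inner_div_norm_le (T x))
  have hinj := LinearMap.injective_of_mul_norm_le hγ hlow
  have hDPG : ∀ uh : Uh, (∀ wh : Uh, b uh (Θ wh) = F (Θ wh)) ↔
      T uh = (Uh.map T).starProjection (T u) := by
    intro uh
    rw [map_eq_starProjection_iff uh.2, hTΘ]
    simp only [Subtype.forall, inner_sub_left, hΘ, hu, sub_eq_zero]
    exact forall₂_congr fun _ _ => eq_comm
  refine ⟨(existsUnique_congr hDPG).mpr (existsUnique_map_eq_starProjection hinj _),
    fun uh huh => ?_⟩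
  refine le_div_mul_iInf_of_forall_mul_le (f := fun wh : Uh => ‖u - wh‖) hγ
    (fun _ => norm_nonneg _) uh fun wh => ?_
  calc γ * ‖u - uh‖ ≤ ‖T (u - uh)‖ := hlow _
    _ ≤ ‖T (u - wh)‖ := by
      simpa only [map_sub] using norm_sub_map_le_of_eq_starProjection ((hDPG uh).mp huh) wh.2
    _ ≤ M * ‖u - wh‖ := norm_le_of_forall_abs_inner_le hM hT hinj _

/-- ideal DPG quasi-optimality. -/
theorem statement2
    {U V : Type*} [NormedAddCommGroup U] [InnerProductSpace ℝ U] [CompleteSpace U]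
    [NormedAddCommGroup V] [InnerProductSpace ℝ V] [CompleteSpace V]
    (b : U →L[ℝ] V →L[ℝ] ℝ) (M γ : ℝ)
    (hM : ∀ (u : U) (v : V), |b u v| ≤ M * ‖u‖ * ‖v‖)
    (hγ : 0 < γ)
    (hinfsup : ∀ u : U, γ * ‖u‖ ≤ ⨆ v : {v : V // v ≠ 0}, b u v.1 / ‖v.1‖)
    (Θ : U → V) (hΘ : ∀ (u : U) (v : V), ⟪Θ u, v⟫_ℝ = b u v)
    (F : V →L[ℝ] ℝ) (u : U) (hu : ∀ v : V, b u v = F v)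
    (Uh : Submodule ℝ U) [FiniteDimensional ℝ Uh] :
    (∃! uh : Uh, ∀ wh : Uh, b uh (Θ wh) = F (Θ wh)) ∧
    (∀ uh : Uh, (∀ wh : Uh, b uh (Θ wh) = F (Θ wh)) →
      ‖u - uh‖ ≤ M / γ * ⨅ wh : Uh, ‖u - (wh : U)‖) :=
  statement2_general b M γ hM hγ hinfsup Θ hΘ F u hu Uh
end

section
/- (Fortin operator implies discrete inf-sup.) Assume b satisfies the inf-sup condition with constant γ > 0 and that there is a Fortin operator Π_F : V → V_h with constant C_F for the subspace U_h. Then the discrete inf-sup condition holds: (γ/C_F)·‖u_h‖_U ≤ sup_{0≠v_h∈V_h} b(u_h, v_h)/‖v_h‖_V for all u_h ∈ U_h. -/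
/-! For a real functional `f`, the supremum of `f v / ‖v‖` over `v ≠ 0` is the operator norm `‖f‖`
(replace `v` by `-v` to see that the sign does not matter). Both inf-sup quantities are therefore
operator norms: `‖b u‖` on `V` and `‖(b u)|_{V_h}‖` on `V_h`. The Fortin identity
`b u = b u ∘ Π_F` factors `b u` through `V_h` via a map of norm at most `C_F`, so
`‖b u‖ ≤ C_F ‖(b u)|_{V_h}‖`. -/

namespace ContinuousLinearMap

section Real

variable {E : Type*} [NormedAddCommGroup E] [NormedSpace ℝ E]

theorem div_norm_le_opNorm (f : E →L[ℝ] ℝ) (v : E) : f v / ‖v‖ ≤ ‖f‖ :=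
  div_le_of_le_mul₀ (norm_nonneg _) (norm_nonneg _) ((le_abs_self _).trans (f.le_opNorm v))

theorem iSup_div_norm_eq_opNorm (f : E →L[ℝ] ℝ) :
    ⨆ v : {v : E // v ≠ 0}, f v / ‖(v : E)‖ = ‖f‖ := by
  rcases isEmpty_or_nonempty {v : E // v ≠ 0} with hE | hne
  · have : Subsingleton E := ⟨fun x y => by
      by_contra hxy
      exact hE.false ⟨x - y, sub_ne_zero.2 hxy⟩⟩
    rw [Real.iSup_of_isEmpty, Subsingleton.elim f 0, norm_zero]
  obtain ⟨v₀, hv₀⟩ := hne.some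
  set S := ⨆ v : {v : E // v ≠ 0}, f v / ‖(v : E)‖
  have hbdd : BddAbove (Set.range fun v : {v : E // v ≠ 0} => f v / ‖(v : E)‖) :=
    ⟨‖f‖, Set.forall_mem_range.2 fun v => f.div_norm_le_opNorm v⟩
  have hle : ∀ v : E, f v ≤ S * ‖v‖ := fun v => by
    rcases eq_or_ne v 0 with rfl | hv
    · simp
    · exact (div_le_iff₀ (norm_pos_iff.2 hv)).1 (le_ciSup hbdd ⟨v, hv⟩)
  have habs : ∀ v : E, |f v| ≤ S * ‖v‖ := fun v =>
    abs_le'.2 ⟨hle v, by simpa using hle (-v)⟩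
  have hS : 0 ≤ S :=
    nonneg_of_mul_nonneg_left ((abs_nonneg _).trans (habs v₀)) (norm_pos_iff.2 hv₀)
  exact le_antisymm (ciSup_le fun v => f.div_norm_le_opNorm v) (f.opNorm_le_bound hS habs)

end Real

variable {𝕜 E F : Type*} [NontriviallyNormedField 𝕜] [NormedAddCommGroup E] [NormedSpace 𝕜 E]
  [NormedAddCommGroup F] [NormedSpace 𝕜 F]

theorem opNorm_le_mul_opNorm_comp_subtypeL_of_comp_eq (f : E →L[𝕜] F) (W : Submodule 𝕜 E)
    (P : E →ₗ[𝕜] E) (hPW : ∀ v, P v ∈ W) {C : ℝ} (hC : 0 ≤ C) (hPC : ∀ v, ‖P v‖ ≤ C * ‖v‖)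
    (hfP : ∀ v, f (P v) = f v) : ‖f‖ ≤ C * ‖f.comp W.subtypeL‖ := by
  refine f.opNorm_le_bound (mul_nonneg hC (norm_nonneg _)) fun v => ?_
  calc ‖f v‖ = ‖f.comp W.subtypeL ⟨P v, hPW v⟩‖ := by simp [hfP]
    _ ≤ ‖f.comp W.subtypeL‖ * ‖P v‖ := (f.comp W.subtypeL).le_opNorm _
    _ ≤ ‖f.comp W.subtypeL‖ * (C * ‖v‖) := by gcongr; exact hPC v
    _ = C * ‖f.comp W.subtypeL‖ * ‖v‖ := by ring

end ContinuousLinearMap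

theorem statement3_general
    {U V : Type*} [NormedAddCommGroup U] [InnerProductSpace ℝ U]
    [NormedAddCommGroup V] [InnerProductSpace ℝ V]
    (b : U →L[ℝ] V →L[ℝ] ℝ) (γ : ℝ)
    (hinfsup : ∀ u : U, γ * ‖u‖ ≤ ⨆ v : {v : V // v ≠ 0}, b u v.1 / ‖v.1‖)
    (Uh : Submodule ℝ U) (Vh : Submodule ℝ V)
    (PiF : V →ₗ[ℝ] V) (hPiFmem : ∀ v : V, PiF v ∈ Vh)
    (CF : ℝ) (hCF : 0 < CF)
    (hPiFbdd : ∀ v : V, ‖PiF v‖ ≤ CF * ‖v‖)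
    (hFortin : ∀ uh ∈ Uh, ∀ v : V, b uh (PiF v) = b uh v) :
    ∀ uh : Uh, γ / CF * ‖(uh : U)‖ ≤
      ⨆ vh : {vh : Vh // vh ≠ 0}, b uh (vh.1 : V) / ‖(vh.1 : V)‖ := by
  intro uh
  have hcont : γ * ‖(uh : U)‖ ≤ ‖b uh‖ :=
    (b uh).iSup_div_norm_eq_opNorm ▸ hinfsup uh
  have hdisc : ⨆ vh : {vh : Vh // vh ≠ 0}, b uh (vh.1 : V) / ‖(vh.1 : V)‖ =
      ‖(b uh).comp Vh.subtypeL‖ :=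
    ((b uh).comp Vh.subtypeL).iSup_div_norm_eq_opNorm
  have hfortin : ‖b uh‖ ≤ CF * ‖(b uh).comp Vh.subtypeL‖ :=
    (b uh).opNorm_le_mul_opNorm_comp_subtypeL_of_comp_eq Vh PiF hPiFmem hCF.le hPiFbdd
      (hFortin uh uh.2)
  rw [hdisc, div_mul_eq_mul_div, div_le_iff₀ hCF, mul_comm _ CF]
  exact hcont.trans hfortin

/-- a Fortin operator implies the discrete inf-sup condition. -/
theorem statement3
    {U V : Type*} [NormedAddCommGroup U] [InnerProductSpace ℝ U] [CompleteSpace U]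
    [NormedAddCommGroup V] [InnerProductSpace ℝ V] [CompleteSpace V]
    (b : U →L[ℝ] V →L[ℝ] ℝ) (M γ : ℝ)
    (hM : ∀ (u : U) (v : V), |b u v| ≤ M * ‖u‖ * ‖v‖)
    (hγ : 0 < γ)
    (hinfsup : ∀ u : U, γ * ‖u‖ ≤ ⨆ v : {v : V // v ≠ 0}, b u v.1 / ‖v.1‖)
    (Uh : Submodule ℝ U) (Vh : Submodule ℝ V) (hVh : IsClosed (Vh : Set V))
    (PiF : V →ₗ[ℝ] V) (hPiFmem : ∀ v : V, PiF v ∈ Vh)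
    (CF : ℝ) (hCF : 0 < CF)
    (hPiFbdd : ∀ v : V, ‖PiF v‖ ≤ CF * ‖v‖)
    (hFortin : ∀ uh ∈ Uh, ∀ v : V, b uh (PiF v) = b uh v) :
    ∀ uh : Uh, γ / CF * ‖(uh : U)‖ ≤
      ⨆ vh : {vh : Vh // vh ≠ 0}, b uh (vh.1 : V) / ‖(vh.1 : V)‖ :=
  statement3_general b γ hinfsup Uh Vh PiF hPiFmem CF hCF hPiFbdd hFortin
end

section
/- (Fully discrete DPG method.) Assume b is bounded with constant M and satisfies the inf-sup condition with constant γ > 0. Let U_h ⊆ U be a finite-dimensional subspace, V_h ⊆ V a closed subspace, and assume a Fortin operator Π_F : V → V_h with constant C_F exists. Let F ∈ V' and let u ∈ U satisfy b(u, v) = F(v) for all v ∈ V. Then there exists a unique u_h ∈ U_h such that b(u_h, Θ_h w_h) = F(Θ_h w_h) for all w_h ∈ U_h, and ‖u − u_h‖_U ≤ (1 + M·C_F/γ)·inf_{w_h ∈ U_h} ‖u − w_h‖_U. -/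
open scoped InnerProductSpace

/-!
Fortin's operator transfers the inf-sup condition to the trial-to-test operator:
`γ ‖zₕ‖ ≤ C_F ‖Θₕ zₕ‖`. As `b(zₕ, Θₕ zₕ) = ‖Θₕ zₕ‖²`, this gives uniqueness of the discrete
solution, and existence is the Riesz representation of `F` on the finite-dimensional range of
`Θₕ`. For quasi-optimality, Galerkin orthogonality gives
`‖Θₕ (wₕ - uₕ)‖² = b(wₕ - u, Θₕ (wₕ - uₕ)) ≤ M ‖u - wₕ‖ ‖Θₕ (wₕ - uₕ)‖`, so
`γ ‖wₕ - uₕ‖ ≤ M C_F ‖u - wₕ‖`, and the triangle inequality finishes.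
-/

theorem Submodule.eq_of_forall_inner_eq {𝕜 E : Type*} [RCLike 𝕜] [NormedAddCommGroup E]
    [InnerProductSpace 𝕜 E] {K : Submodule 𝕜 E} {y z : E} (hy : y ∈ K) (hz : z ∈ K)
    (h : ∀ v ∈ K, ⟪y, v⟫_𝕜 = ⟪z, v⟫_𝕜) : y = z :=
  sub_eq_zero.mp <| (inner_self_eq_zero (𝕜 := 𝕜)).mp <| by
    rw [inner_sub_left, h _ (K.sub_mem hy hz), sub_self]

theorem Submodule.exists_mem_forall_inner_eq {𝕜 E : Type*} [RCLike 𝕜] [NormedAddCommGroup E]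
    [InnerProductSpace 𝕜 E] (K : Submodule 𝕜 E) [CompleteSpace K] (F : E →L[𝕜] 𝕜) :
    ∃ y ∈ K, ∀ v ∈ K, ⟪y, v⟫_𝕜 = F v :=
  ⟨_, ((InnerProductSpace.toDual 𝕜 K).symm (F.comp K.subtypeL)).2, fun v hv =>
    (K.coe_inner _ ⟨v, hv⟩).symm.trans InnerProductSpace.toDual_symm_apply⟩

namespace DPG

variable {U V : Type*} [NormedAddCommGroup U] [NormedSpace ℝ U]
  [NormedAddCommGroup V] [InnerProductSpace ℝ V]

theorem nonneg_of_abs_le_of_infSup [Nontrivial U] {b : U →L[ℝ] V →L[ℝ] ℝ} {M γ : ℝ}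
    (hM : ∀ (u : U) (v : V), |b u v| ≤ M * ‖u‖ * ‖v‖) (hγ : 0 < γ)
    (hinfsup : ∀ u : U, γ * ‖u‖ ≤ ⨆ v : {v : V // v ≠ 0}, b u v.1 / ‖v.1‖) : 0 ≤ M := by
  obtain ⟨x, hx⟩ := exists_ne (0 : U)
  by_contra! hM0
  have hsup : ⨆ v : {v : V // v ≠ 0}, b x v.1 / ‖v.1‖ ≤ 0 := by
    refine Real.iSup_le (fun v => div_nonpos_of_nonpos_of_nonneg ?_ (norm_nonneg _)) le_rfl
    calc b x v.1 ≤ M * ‖x‖ * ‖v.1‖ := (le_abs_self _).trans (hM x v)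
      _ ≤ 0 := mul_nonpos_of_nonpos_of_nonneg
          (mul_nonpos_of_nonpos_of_nonneg hM0.le (norm_nonneg _)) (norm_nonneg _)
  linarith [hinfsup x, mul_pos hγ (norm_pos_iff.mpr hx)]

structure IsTrialToTest (b : U →L[ℝ] V →L[ℝ] ℝ) {Uh : Submodule ℝ U} (Vh : Submodule ℝ V)
    (Θ : Uh → V) : Prop where
  mem : ∀ x, Θ x ∈ Vh
  inner_eq : ∀ x, ∀ v ∈ Vh, ⟪Θ x, v⟫_ℝ = b x v

structure IsFortinOperator (b : U →L[ℝ] V →L[ℝ] ℝ) (Uh : Submodule ℝ U) (Vh : Submodule ℝ V)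
    (P : V →ₗ[ℝ] V) (CF : ℝ) : Prop where
  mem : ∀ v, P v ∈ Vh
  norm_le : ∀ v, ‖P v‖ ≤ CF * ‖v‖
  apply_eq : ∀ x ∈ Uh, ∀ v, b x (P v) = b x v

namespace IsTrialToTest

variable {b : U →L[ℝ] V →L[ℝ] ℝ} {Uh : Submodule ℝ U} {Vh : Submodule ℝ V}
  {Θ : Uh → V} {γ CF : ℝ}

theorem norm_sq_eq (hΘ : IsTrialToTest b Vh Θ) (x : Uh) : ‖Θ x‖ ^ 2 = b x (Θ x) := by
  rw [← real_inner_self_eq_norm_sq, hΘ.inner_eq x _ (hΘ.mem x)]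

theorem isLinearMap (hΘ : IsTrialToTest b Vh Θ) : IsLinearMap ℝ Θ where
  map_add x y := Submodule.eq_of_forall_inner_eq (hΘ.mem _) (Vh.add_mem (hΘ.mem x) (hΘ.mem y))
    fun v hv => by
      rw [inner_add_left, hΘ.inner_eq _ _ hv, hΘ.inner_eq _ _ hv, hΘ.inner_eq _ _ hv,
        Submodule.coe_add, map_add, add_apply]
  map_smul c x := Submodule.eq_of_forall_inner_eq (hΘ.mem _) (Vh.smul_mem c (hΘ.mem x))
    fun v hv => by
      rw [real_inner_smul_left, hΘ.inner_eq _ _ hv, hΘ.inner_eq _ _ hv, Submodule.coe_smul,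
        map_smul, smul_apply, smul_eq_mul]

theorem exists_forall_apply_eq [FiniteDimensional ℝ Uh] (hΘ : IsTrialToTest b Vh Θ)
    (F : V →L[ℝ] ℝ) : ∃ uh : Uh, ∀ wh, b uh (Θ wh) = F (Θ wh) := by
  obtain ⟨_, ⟨uh, rfl⟩, hF⟩ :=
    (LinearMap.range (IsLinearMap.mk' Θ hΘ.isLinearMap)).exists_mem_forall_inner_eq F
  exact ⟨uh, fun wh => (hΘ.inner_eq uh _ (hΘ.mem wh)).symm.trans (hF _ ⟨wh, rfl⟩)⟩

theorem discrete_infSup (hΘ : IsTrialToTest b Vh Θ) {P : V →ₗ[ℝ] V}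
    (hP : IsFortinOperator b Uh Vh P CF) (hCF : 0 ≤ CF)
    (hinfsup : ∀ u : U, γ * ‖u‖ ≤ ⨆ v : {v : V // v ≠ 0}, b u v.1 / ‖v.1‖) (x : Uh) :
    γ * ‖(x : U)‖ ≤ CF * ‖Θ x‖ := by
  refine (hinfsup x).trans (Real.iSup_le (fun ⟨v, hv⟩ => ?_) (by positivity))
  rw [div_le_iff₀ (norm_pos_iff.mpr hv)]
  calc b x v = b x (P v) := (hP.apply_eq _ x.2 v).symm
    _ = ⟪Θ x, P v⟫_ℝ := (hΘ.inner_eq x _ (hP.mem v)).symm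
    _ ≤ ‖Θ x‖ * ‖P v‖ := real_inner_le_norm _ _
    _ ≤ ‖Θ x‖ * (CF * ‖v‖) := by gcongr; exact hP.norm_le v
    _ = CF * ‖Θ x‖ * ‖v‖ := by ring

theorem eq_zero_of_forall_apply_eq_zero (hΘ : IsTrialToTest b Vh Θ) (hγ : 0 < γ)
    (hstab : ∀ x : Uh, γ * ‖(x : U)‖ ≤ CF * ‖Θ x‖) {z : Uh} (hz : ∀ wh, b z (Θ wh) = 0) :
    z = 0 := by
  have hΘz : Θ z = 0 := by simpa [hz z] using hΘ.norm_sq_eq z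
  have := hstab z
  rw [hΘz, norm_zero, mul_zero] at this
  simpa using nonpos_of_mul_nonpos_right this hγ

theorem norm_sub_le (hΘ : IsTrialToTest b Vh Θ) {M : ℝ}
    (hM : ∀ (u : U) (v : V), |b u v| ≤ M * ‖u‖ * ‖v‖) (hM0 : 0 ≤ M) (hγ : 0 < γ)
    (hCF : 0 ≤ CF) (hstab : ∀ x : Uh, γ * ‖(x : U)‖ ≤ CF * ‖Θ x‖) {u : U} {uh : Uh}
    (horth : ∀ wh, b uh (Θ wh) = b u (Θ wh)) (wh : Uh) :
    ‖u - uh‖ ≤ (1 + M * CF / γ) * ‖u - wh‖ := by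
  have hΘe : ‖Θ (wh - uh)‖ ≤ M * ‖u - wh‖ := by
    have hsq : ‖Θ (wh - uh)‖ ^ 2 = b (wh - u) (Θ (wh - uh)) := by
      rw [hΘ.norm_sq_eq, Submodule.coe_sub, map_sub, map_sub, sub_apply,
        sub_apply, horth]
    have hle := (le_abs_self _).trans (hM (wh - u) (Θ (wh - uh)))
    rw [← hsq, norm_sub_rev] at hle
    nlinarith [norm_nonneg (Θ (wh - uh)), mul_nonneg hM0 (norm_nonneg (u - wh))]
  have he : γ * ‖(wh : U) - uh‖ ≤ CF * (M * ‖u - wh‖) :=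
    (hstab _).trans (mul_le_mul_of_nonneg_left hΘe hCF)
  calc ‖u - uh‖ ≤ ‖u - wh‖ + ‖(wh : U) - uh‖ := norm_sub_le_norm_sub_add_norm_sub _ _ _
    _ ≤ ‖u - wh‖ + M * CF / γ * ‖u - wh‖ := by
      gcongr
      rw [div_mul_eq_mul_div, le_div_iff₀ hγ]
      linarith
    _ = (1 + M * CF / γ) * ‖u - wh‖ := by ring

end IsTrialToTest

end DPG

theorem statement4_general
    {U V : Type*} [NormedAddCommGroup U] [InnerProductSpace ℝ U]
    [NormedAddCommGroup V] [InnerProductSpace ℝ V]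
    (b : U →L[ℝ] V →L[ℝ] ℝ) (M γ : ℝ)
    (hM : ∀ (u : U) (v : V), |b u v| ≤ M * ‖u‖ * ‖v‖)
    (hγ : 0 < γ)
    (hinfsup : ∀ u : U, γ * ‖u‖ ≤ ⨆ v : {v : V // v ≠ 0}, b u v.1 / ‖v.1‖)
    (Uh : Submodule ℝ U) [FiniteDimensional ℝ Uh]
    (Vh : Submodule ℝ V)
    (PiF : V →ₗ[ℝ] V) (hPiFmem : ∀ v : V, PiF v ∈ Vh)
    (CF : ℝ) (hCF : 0 < CF)
    (hPiFbdd : ∀ v : V, ‖PiF v‖ ≤ CF * ‖v‖)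
    (hFortin : ∀ uh ∈ Uh, ∀ v : V, b uh (PiF v) = b uh v)
    (Θh : Uh → V) (hΘhmem : ∀ uh : Uh, Θh uh ∈ Vh)
    (hΘh : ∀ (uh : Uh), ∀ vh ∈ Vh, ⟪Θh uh, vh⟫_ℝ = b uh vh)
    (F : V →L[ℝ] ℝ) (u : U) (hu : ∀ v : V, b u v = F v) :
    (∃! uh : Uh, ∀ wh : Uh, b uh (Θh wh) = F (Θh wh)) ∧
    (∀ uh : Uh, (∀ wh : Uh, b uh (Θh wh) = F (Θh wh)) →
      ‖u - uh‖ ≤ (1 + M * CF / γ) * ⨅ wh : Uh, ‖u - (wh : U)‖) := by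
  have hΘ : DPG.IsTrialToTest b Vh Θh := ⟨hΘhmem, hΘh⟩
  have hstab := hΘ.discrete_infSup ⟨hPiFmem, hPiFbdd, hFortin⟩ hCF.le hinfsup
  refine ⟨?_, fun uh huh => ?_⟩
  · obtain ⟨uh, huh⟩ := hΘ.exists_forall_apply_eq F
    refine ⟨uh, huh, fun vh hvh => sub_eq_zero.mp ?_⟩
    exact hΘ.eq_zero_of_forall_apply_eq_zero hγ hstab fun wh => by simp [hvh wh, huh wh]
  · rcases subsingleton_or_nontrivial U with hU | hU
    · simp [Subsingleton.elim _ (0 : U)]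
    have hM0 := DPG.nonneg_of_abs_le_of_infSup hM hγ hinfsup
    rw [Real.mul_iInf_of_nonneg (add_nonneg zero_le_one (by positivity))]
    exact le_ciInf <| hΘ.norm_sub_le hM hM0 hγ hCF.le hstab fun wh => (huh wh).trans (hu _).symm

/-- the fully discrete DPG method is well posed and quasi-optimal. -/
theorem statement4
    {U V : Type*} [NormedAddCommGroup U] [InnerProductSpace ℝ U] [CompleteSpace U]
    [NormedAddCommGroup V] [InnerProductSpace ℝ V] [CompleteSpace V]
    (b : U →L[ℝ] V →L[ℝ] ℝ) (M γ : ℝ)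
    (hM : ∀ (u : U) (v : V), |b u v| ≤ M * ‖u‖ * ‖v‖)
    (hγ : 0 < γ)
    (hinfsup : ∀ u : U, γ * ‖u‖ ≤ ⨆ v : {v : V // v ≠ 0}, b u v.1 / ‖v.1‖)
    (Uh : Submodule ℝ U) [FiniteDimensional ℝ Uh]
    (Vh : Submodule ℝ V) (hVh : IsClosed (Vh : Set V))
    (PiF : V →ₗ[ℝ] V) (hPiFmem : ∀ v : V, PiF v ∈ Vh)
    (CF : ℝ) (hCF : 0 < CF)
    (hPiFbdd : ∀ v : V, ‖PiF v‖ ≤ CF * ‖v‖)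
    (hFortin : ∀ uh ∈ Uh, ∀ v : V, b uh (PiF v) = b uh v)
    (Θh : Uh → V) (hΘhmem : ∀ uh : Uh, Θh uh ∈ Vh)
    (hΘh : ∀ (uh : Uh), ∀ vh ∈ Vh, ⟪Θh uh, vh⟫_ℝ = b uh vh)
    (F : V →L[ℝ] ℝ) (u : U) (hu : ∀ v : V, b u v = F v) :
    (∃! uh : Uh, ∀ wh : Uh, b uh (Θh wh) = F (Θh wh)) ∧
    (∀ uh : Uh, (∀ wh : Uh, b uh (Θh wh) = F (Θh wh)) →
      ‖u - uh‖ ≤ (1 + M * CF / γ) * ⨅ wh : Uh, ‖u - (wh : U)‖) :=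
  statement4_general b M γ hM hγ hinfsup Uh Vh PiF hPiFmem CF hCF hPiFbdd hFortin Θh hΘhmem hΘh F u
    hu
end

section
/- (Breaking-spaces inf-sup theorem.) Let U₀, Û, V be real Hilbert spaces, b₀ : U₀ × V → ℝ and b̂ : Û × V → ℝ bounded bilinear forms with |b₀(u₀,v)| ≤ M₀·‖u₀‖·‖v‖, and set V₀ := {v ∈ V : b̂(û, v) = 0 for all û ∈ Û}. Assume: (i) there is c₀ > 0 with c₀·‖u₀‖ ≤ sup_{0≠v∈V₀} b₀(u₀,v)/‖v‖_V for all u₀ ∈ U₀; (ii) if v ∈ V₀ and b₀(u₀, v) = 0 for all u₀ ∈ U₀, then v = 0; (iii) there is ĉ > 0 with ĉ·‖û‖ ≤ sup_{0≠v∈V} b̂(û,v)/‖v‖_V for all û ∈ Û. Define b((u₀,û), v) := b₀(u₀,v) + b̂(û,v) on (U₀ × Û) × V. Then there is γ > 0 (depending only on c₀, ĉ, M₀) such that γ·(‖u₀‖² + ‖û‖²)^{1/2} ≤ sup_{0≠v∈V} b((u₀,û), v)/‖v‖_V for all (u₀,û) ∈ U₀ × Û, and moreover if v ∈ V satisfies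 b((u₀,û), v) = 0 for all (u₀,û) ∈ U₀ × Û then v = 0. -/
/-!
The supremum of `ℓ v / ‖v‖` over `v ≠ 0` is the dual norm `‖ℓ‖`, so everything reduces to
estimates for `S := ‖b₀ u₀ + b̂ û‖`. Testing only with `v ∈ V₀` kills `b̂ û`, whence
`c₀ ‖u₀‖ ≤ S`; the triangle inequality gives `ĉ ‖û‖ ≤ ‖b̂ û‖ ≤ S + ‖b₀‖ ‖u₀‖`. Eliminating `‖u₀‖`
from the second bound with the first controls `‖u₀‖ + ‖û‖ ≥ √(‖u₀‖² + ‖û‖²)` by a multiple of `S`.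
Injectivity follows by testing with `(0, û)` and `(u₀, 0)`.
-/

namespace ContinuousLinearMap

section SeminormedDual

variable {V : Type*} [SeminormedAddCommGroup V] [NormedSpace ℝ V]

theorem apply_div_norm_le_opNorm (ℓ : V →L[ℝ] ℝ) (v : V) : ℓ v / ‖v‖ ≤ ‖ℓ‖ :=
  (div_le_div_of_nonneg_right (le_abs_self _) (norm_nonneg v)).trans (ℓ.ratio_le_opNorm v)

theorem iSup_apply_div_norm_le_opNorm {ι : Type*} (ℓ : V →L[ℝ] ℝ) (w : ι → V) :
    ⨆ i, ℓ (w i) / ‖w i‖ ≤ ‖ℓ‖ :=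
  Real.iSup_le (fun i => ℓ.apply_div_norm_le_opNorm (w i)) (norm_nonneg ℓ)

end SeminormedDual

variable {V : Type*} [NormedAddCommGroup V] [NormedSpace ℝ V]

theorem iSup_ne_zero_apply_div_norm_eq_opNorm (ℓ : V →L[ℝ] ℝ) :
    ⨆ v : {v : V // v ≠ 0}, ℓ v.1 / ‖v.1‖ = ‖ℓ‖ := by
  set S := ⨆ v : {v : V // v ≠ 0}, ℓ v.1 / ‖v.1‖
  have hbdd : BddAbove (Set.range fun v : {v : V // v ≠ 0} => ℓ v.1 / ‖v.1‖) :=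
    ⟨‖ℓ‖, Set.forall_mem_range.2 fun v => ℓ.apply_div_norm_le_opNorm v.1⟩
  have hbound : ∀ v : V, v ≠ 0 → ‖ℓ v‖ ≤ S * ‖v‖ := by
    intro v hv
    have hv' : 0 < ‖v‖ := norm_pos_iff.2 hv
    have hpos := le_ciSup hbdd ⟨v, hv⟩
    have hneg := le_ciSup hbdd ⟨-v, neg_ne_zero.2 hv⟩
    simp only [map_neg, norm_neg] at hneg
    rw [div_le_iff₀ hv'] at hpos hneg
    exact Real.norm_eq_abs _ ▸ abs_le.2 ⟨by linarith, hpos⟩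
  have hS : 0 ≤ S := by
    rcases isEmpty_or_nonempty {v : V // v ≠ 0} with h | ⟨v, hv⟩
    · exact (Real.iSup_of_isEmpty _).ge
    · have := (norm_nonneg (ℓ v)).trans (hbound v hv)
      exact nonneg_of_mul_nonneg_left this (norm_pos_iff.2 hv)
  exact le_antisymm (ℓ.iSup_apply_div_norm_le_opNorm _)
    (ℓ.opNorm_le_bound' hS fun v hv => hbound v (norm_ne_zero_iff.1 hv))

end ContinuousLinearMap

theorem mul_sqrt_sq_add_sq_le {a b c₀ ĉ M S : ℝ} (ha : 0 ≤ a) (hb : 0 ≤ b) (hc₀ : 0 < c₀)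
    (hĉ : 0 < ĉ) (hM : 0 ≤ M) (h₀ : c₀ * a ≤ S) (h₁ : ĉ * b ≤ S + M * a) :
    c₀ * ĉ / (c₀ + ĉ + M) * √(a ^ 2 + b ^ 2) ≤ S := by
  have hsqrt : √(a ^ 2 + b ^ 2) ≤ a + b := (Real.sqrt_le_left (by positivity)).2 (by nlinarith)
  have hsum : c₀ * ĉ * (a + b) ≤ (c₀ + ĉ + M) * S := by
    nlinarith [mul_le_mul_of_nonneg_left h₀ hĉ.le, mul_le_mul_of_nonneg_left h₁ hc₀.le,
      mul_le_mul_of_nonneg_left h₀ hM]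
  calc c₀ * ĉ / (c₀ + ĉ + M) * √(a ^ 2 + b ^ 2)
      ≤ c₀ * ĉ / (c₀ + ĉ + M) * (a + b) := by gcongr
    _ ≤ S := by rw [div_mul_eq_mul_div, div_le_iff₀ (by positivity)]; linarith

theorem statement5_general
    {U₀ Uhat V : Type*}
    [NormedAddCommGroup U₀] [InnerProductSpace ℝ U₀]
    [NormedAddCommGroup Uhat] [InnerProductSpace ℝ Uhat]
    [NormedAddCommGroup V] [InnerProductSpace ℝ V]
    (b₀ : U₀ →L[ℝ] V →L[ℝ] ℝ) (bhat : Uhat →L[ℝ] V →L[ℝ] ℝ)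
    (c₀ : ℝ) (hc₀ : 0 < c₀)
    (hinfsup₀ : ∀ u₀ : U₀, c₀ * ‖u₀‖ ≤
      ⨆ v : {v : V // (∀ uhat : Uhat, bhat uhat v = 0) ∧ v ≠ 0}, b₀ u₀ v.1 / ‖v.1‖)
    (hinj : ∀ v : V, (∀ uhat : Uhat, bhat uhat v = 0) →
      (∀ u₀ : U₀, b₀ u₀ v = 0) → v = 0)
    (chat : ℝ) (hchat : 0 < chat)
    (hinfsuphat : ∀ uhat : Uhat, chat * ‖uhat‖ ≤
      ⨆ v : {v : V // v ≠ 0}, bhat uhat v.1 / ‖v.1‖) :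
    ∃ γ > (0 : ℝ),
      (∀ (u₀ : U₀) (uhat : Uhat),
        γ * Real.sqrt (‖u₀‖ ^ 2 + ‖uhat‖ ^ 2) ≤
          ⨆ v : {v : V // v ≠ 0}, (b₀ u₀ v.1 + bhat uhat v.1) / ‖v.1‖) ∧
      (∀ v : V, (∀ (u₀ : U₀) (uhat : Uhat), b₀ u₀ v + bhat uhat v = 0) → v = 0) := by
  refine ⟨c₀ * chat / (c₀ + chat + ‖b₀‖), by positivity, fun u₀ uhat => ?_,
    fun v hv => hinj v (fun uhat => by simpa using hv 0 uhat) (fun u₀ => by simpa using hv u₀ 0)⟩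
  set ℓ := b₀ u₀ + bhat uhat
  have hℓ : ⨆ v : {v : V // v ≠ 0}, (b₀ u₀ v.1 + bhat uhat v.1) / ‖v.1‖ = ‖ℓ‖ :=
    ℓ.iSup_ne_zero_apply_div_norm_eq_opNorm
  have h₀ : c₀ * ‖u₀‖ ≤ ‖ℓ‖ := by
    refine (hinfsup₀ u₀).trans (le_of_eq_of_le (iSup_congr fun v => ?_)
      (ℓ.iSup_apply_div_norm_le_opNorm Subtype.val))
    simp [ℓ, v.2.1 uhat]
  have h₁ : chat * ‖uhat‖ ≤ ‖ℓ‖ + ‖b₀‖ * ‖u₀‖ :=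
    calc chat * ‖uhat‖ ≤ ‖bhat uhat‖ :=
          (bhat uhat).iSup_ne_zero_apply_div_norm_eq_opNorm ▸ hinfsuphat uhat
      _ = ‖ℓ - b₀ u₀‖ := by simp [ℓ]
      _ ≤ ‖ℓ‖ + ‖b₀‖ * ‖u₀‖ := (norm_sub_le _ _).trans (by gcongr; exact b₀.le_opNorm u₀)
  rw [hℓ]
  exact mul_sqrt_sq_add_sq_le (norm_nonneg _) (norm_nonneg _) hc₀ hchat (norm_nonneg b₀) h₀ h₁

/-- breaking-spaces inf-sup theorem. -/
theorem statement5
    {U₀ Uhat V : Type*}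
    [NormedAddCommGroup U₀] [InnerProductSpace ℝ U₀] [CompleteSpace U₀]
    [NormedAddCommGroup Uhat] [InnerProductSpace ℝ Uhat] [CompleteSpace Uhat]
    [NormedAddCommGroup V] [InnerProductSpace ℝ V] [CompleteSpace V]
    (b₀ : U₀ →L[ℝ] V →L[ℝ] ℝ) (bhat : Uhat →L[ℝ] V →L[ℝ] ℝ)
    (M₀ : ℝ) (hM₀ : ∀ (u₀ : U₀) (v : V), |b₀ u₀ v| ≤ M₀ * ‖u₀‖ * ‖v‖)
    (c₀ : ℝ) (hc₀ : 0 < c₀)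
    (hinfsup₀ : ∀ u₀ : U₀, c₀ * ‖u₀‖ ≤
      ⨆ v : {v : V // (∀ uhat : Uhat, bhat uhat v = 0) ∧ v ≠ 0}, b₀ u₀ v.1 / ‖v.1‖)
    (hinj : ∀ v : V, (∀ uhat : Uhat, bhat uhat v = 0) →
      (∀ u₀ : U₀, b₀ u₀ v = 0) → v = 0)
    (chat : ℝ) (hchat : 0 < chat)
    (hinfsuphat : ∀ uhat : Uhat, chat * ‖uhat‖ ≤
      ⨆ v : {v : V // v ≠ 0}, bhat uhat v.1 / ‖v.1‖) :
    ∃ γ > (0 : ℝ),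
      (∀ (u₀ : U₀) (uhat : Uhat),
        γ * Real.sqrt (‖u₀‖ ^ 2 + ‖uhat‖ ^ 2) ≤
          ⨆ v : {v : V // v ≠ 0}, (b₀ u₀ v.1 + bhat uhat v.1) / ‖v.1‖) ∧
      (∀ v : V, (∀ (u₀ : U₀) (uhat : Uhat), b₀ u₀ v + bhat uhat v = 0) → v = 0) :=
  statement5_general b₀ bhat c₀ hc₀ hinfsup₀ hinj chat hchat hinfsuphat
end

section
/- (Abstract a posteriori reliability.) Assume b satisfies the inf-sup condition with constant γ > 0 and that there is a Fortin operator Π_F : V → V_h with constant C_F for the subspace U_h. Let F ∈ V', let u ∈ U satisfy b(u, v) = F(v) for all v ∈ V, and let u_h ∈ U_h be arbitrary. Define the discrete residual η := sup_{0≠v_h∈V_h} |F(v_h) − b(u_h, v_h)|/‖v_h‖_V and the oscillation osc(F) := sup_{0≠v∈V} |F(v − Π_F v)|/‖v‖_V. Then ‖u − u_h‖_U ≤ γ^{-1}·(C_F·η + osc(F)). -/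
/-!
The residual `b (u - u_h) = F - b u_h` is a functional on `V`, and the inf-sup condition bounds
`‖u - u_h‖` by `γ⁻¹` times its dual norm. Any `ℓ ∈ V'` splits as `ℓ ∘ Π_F + ℓ ∘ (1 - Π_F)`; since
`Π_F` maps into `V_h` with constant `C_F`, the first part has norm at most `C_F ‖ℓ|_{V_h}‖`, and for
`ℓ = F - b u_h` the Fortin property kills `b u_h` in the second part, leaving `F ∘ (1 - Π_F)`.
-/

namespace ContinuousLinearMap

variable {𝕜 E W : Type*} [NontriviallyNormedField 𝕜] [NormedAddCommGroup E] [NormedSpace 𝕜 E]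
  [NormedAddCommGroup W] [NormedSpace 𝕜 W]

theorem iSup_ratio_eq_opNorm (f : E →L[𝕜] W) :
    ⨆ x : {x : E // x ≠ 0}, ‖f x.1‖ / ‖x.1‖ = ‖f‖ := by
  refine le_antisymm (Real.iSup_le (fun x => f.ratio_le_opNorm x.1) f.opNorm_nonneg) ?_
  have hbdd : BddAbove (Set.range fun x : {x : E // x ≠ 0} => ‖f x.1‖ / ‖x.1‖) :=
    ⟨‖f‖, Set.forall_mem_range.2 fun x => f.ratio_le_opNorm x.1⟩
  refine f.opNorm_le_bound (Real.iSup_nonneg fun _ => by positivity) fun x => ?_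
  rcases eq_or_ne x 0 with rfl | hx
  · simp
  · exact (div_le_iff₀ (norm_pos_iff.2 hx)).1 (le_ciSup hbdd ⟨x, hx⟩)

theorem opNorm_le_mul_opNorm_comp_subtypeL_add {S : Submodule 𝕜 E} {P : E →L[𝕜] E}
    (hPS : ∀ x, P x ∈ S) {C : ℝ} (hPC : ∀ x, ‖P x‖ ≤ C * ‖x‖) (f : E →L[𝕜] W) :
    ‖f‖ ≤ C * ‖f.comp S.subtypeL‖ + ‖f.comp (1 - P)‖ := by
  rcases subsingleton_or_nontrivial E with hE | hE
  · simp [opNorm_subsingleton]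
  obtain ⟨x₀, hx₀⟩ := exists_ne (0 : E)
  have hC : 0 ≤ C :=
    nonneg_of_mul_nonneg_left ((norm_nonneg _).trans (hPC x₀)) (norm_pos_iff.2 hx₀)
  refine f.opNorm_le_bound (by positivity) fun x => ?_
  have hsplit : f x = f.comp S.subtypeL ⟨P x, hPS x⟩ + f.comp (1 - P) x := by simp
  calc ‖f x‖ ≤ ‖f.comp S.subtypeL‖ * ‖P x‖ + ‖f.comp (1 - P)‖ * ‖x‖ := by
        rw [hsplit]
        exact (norm_add_le _ _).trans (add_le_add (le_opNorm _ _) (le_opNorm _ _))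
    _ ≤ ‖f.comp S.subtypeL‖ * (C * ‖x‖) + ‖f.comp (1 - P)‖ * ‖x‖ := by gcongr; exact hPC x
    _ = (C * ‖f.comp S.subtypeL‖ + ‖f.comp (1 - P)‖) * ‖x‖ := by ring

end ContinuousLinearMap

theorem mul_norm_le_opNorm_of_inf_sup {U V : Type*} [NormedAddCommGroup U] [NormedSpace ℝ U]
    [NormedAddCommGroup V] [NormedSpace ℝ V] {b : U →L[ℝ] V →L[ℝ] ℝ} {γ : ℝ}
    (hinfsup : ∀ u : U, γ * ‖u‖ ≤ ⨆ v : {v : V // v ≠ 0}, b u v.1 / ‖v.1‖) (u : U) :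
    γ * ‖u‖ ≤ ‖b u‖ :=
  (hinfsup u).trans <| Real.iSup_le
    (fun v => (div_le_div_of_nonneg_right (le_abs_self _) (norm_nonneg _)).trans
      ((b u).ratio_le_opNorm v.1))
    (norm_nonneg _)

theorem statement8_general
    {U V : Type*} [NormedAddCommGroup U] [InnerProductSpace ℝ U]
    [NormedAddCommGroup V] [InnerProductSpace ℝ V]
    (b : U →L[ℝ] V →L[ℝ] ℝ) (γ : ℝ)
    (hγ : 0 < γ)
    (hinfsup : ∀ u : U, γ * ‖u‖ ≤ ⨆ v : {v : V // v ≠ 0}, b u v.1 / ‖v.1‖)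
    (Uh : Submodule ℝ U) (Vh : Submodule ℝ V)
    (PiF : V →ₗ[ℝ] V) (hPiFmem : ∀ v : V, PiF v ∈ Vh)
    (CF : ℝ)
    (hPiFbdd : ∀ v : V, ‖PiF v‖ ≤ CF * ‖v‖)
    (hFortin : ∀ uh ∈ Uh, ∀ v : V, b uh (PiF v) = b uh v)
    (F : V →L[ℝ] ℝ) (u : U) (hu : ∀ v : V, b u v = F v)
    (uh : U) (huh : uh ∈ Uh)
    (η osc : ℝ)
    (hη : η = ⨆ vh : {vh : Vh // vh ≠ 0}, |F (vh.1 : V) - b uh (vh.1 : V)| / ‖(vh.1 : V)‖)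
    (hosc : osc = ⨆ v : {v : V // v ≠ 0}, |F (v.1 - PiF v.1)| / ‖v.1‖) :
    ‖u - uh‖ ≤ γ⁻¹ * (CF * η + osc) := by
  set P : V →L[ℝ] V := PiF.mkContinuous CF hPiFbdd
  have hres : b (u - uh) = F - b uh := by ext v; simp [hu]
  have hFortin_comp : (F - b uh).comp (1 - P) = F.comp (1 - P) := by
    ext v; simp [P, hFortin uh huh]
  have hη' : η = ‖(F - b uh).comp Vh.subtypeL‖ := by
    rw [hη, ← ContinuousLinearMap.iSup_ratio_eq_opNorm]; simp
  have hosc' : osc = ‖F.comp (1 - P)‖ := by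
    rw [hosc, ← ContinuousLinearMap.iSup_ratio_eq_opNorm]; simp [P]
  rw [le_inv_mul_iff₀ hγ, hη', hosc', ← hFortin_comp]
  calc γ * ‖u - uh‖ ≤ ‖b (u - uh)‖ := mul_norm_le_opNorm_of_inf_sup hinfsup _
    _ = ‖F - b uh‖ := by rw [hres]
    _ ≤ _ := (F - b uh).opNorm_le_mul_opNorm_comp_subtypeL_add (P := P) hPiFmem hPiFbdd

/-- abstract a posteriori reliability. -/
theorem statement8
    {U V : Type*} [NormedAddCommGroup U] [InnerProductSpace ℝ U] [CompleteSpace U]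
    [NormedAddCommGroup V] [InnerProductSpace ℝ V] [CompleteSpace V]
    (b : U →L[ℝ] V →L[ℝ] ℝ) (M γ : ℝ)
    (hM : ∀ (u : U) (v : V), |b u v| ≤ M * ‖u‖ * ‖v‖)
    (hγ : 0 < γ)
    (hinfsup : ∀ u : U, γ * ‖u‖ ≤ ⨆ v : {v : V // v ≠ 0}, b u v.1 / ‖v.1‖)
    (Uh : Submodule ℝ U) (Vh : Submodule ℝ V) (hVh : IsClosed (Vh : Set V))
    (PiF : V →ₗ[ℝ] V) (hPiFmem : ∀ v : V, PiF v ∈ Vh)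
    (CF : ℝ)
    (hPiFbdd : ∀ v : V, ‖PiF v‖ ≤ CF * ‖v‖)
    (hFortin : ∀ uh ∈ Uh, ∀ v : V, b uh (PiF v) = b uh v)
    (F : V →L[ℝ] ℝ) (u : U) (hu : ∀ v : V, b u v = F v)
    (uh : U) (huh : uh ∈ Uh)
    (η osc : ℝ)
    (hη : η = ⨆ vh : {vh : Vh // vh ≠ 0}, |F (vh.1 : V) - b uh (vh.1 : V)| / ‖(vh.1 : V)‖)
    (hosc : osc = ⨆ v : {v : V // v ≠ 0}, |F (v.1 - PiF v.1)| / ‖v.1‖) :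
    ‖u - uh‖ ≤ γ⁻¹ * (CF * η + osc) :=
  statement8_general b γ hγ hinfsup Uh Vh PiF hPiFmem CF hPiFbdd hFortin F u hu uh huh η osc hη hosc
end

section
/- (Ellipticity implies the Cordes condition in two dimensions.) Let A be a real symmetric 2×2 matrix and let 0 < λ ≤ Λ be such that λ·|x|² ≤ xᵀAx ≤ Λ·|x|² for all x ∈ ℝ². Then, with ε := 2λΛ/(λ² + Λ²), one has ε ∈ (0, 1] and A satisfies the Cordes condition with parameter ε, i.e. ‖A‖_F² ≤ (tr A)²/(1 + ε). -/
/-!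
The eigenvalues `μ, ν` of `A` are Rayleigh quotients at unit eigenvectors, so they lie in
`[λ, Λ]`; moreover `‖A‖_F² = (tr A)² - 2 det A = μ² + ν²` and `tr A = μ + ν`. Since
`1 + ε = (λ + Λ)² / (λ² + Λ²)`, the Cordes inequality becomes `λΛ (μ² + ν²) ≤ μν (λ² + Λ²)`,
i.e. `(λμ - Λν)(Λμ - λν) ≤ 0`, and the two factors have opposite signs because `μ, ν ∈ [λ, Λ]`.
-/

open Matrix

namespace Matrix.IsHermitian

variable {n : Type*} [Fintype n] [DecidableEq n] {A : Matrix n n ℝ} (hA : A.IsHermitian)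

lemma dotProduct_eigenvectorBasis_self (i : n) :
    ⇑(hA.eigenvectorBasis i) ⬝ᵥ ⇑(hA.eigenvectorBasis i) = 1 := by
  have h := real_inner_self_eq_norm_sq (hA.eigenvectorBasis i)
  rw [hA.eigenvectorBasis.orthonormal.1 i, EuclideanSpace.inner_eq_star_dotProduct] at h
  simpa using h

lemma eigenvalues_eq_dotProduct_mulVec (i : n) :
    hA.eigenvalues i = ⇑(hA.eigenvectorBasis i) ⬝ᵥ A *ᵥ ⇑(hA.eigenvectorBasis i) := by
  simpa using hA.eigenvalues_eq i

lemma le_eigenvalues {lam : ℝ} (hlow : ∀ x : n → ℝ, lam * (x ⬝ᵥ x) ≤ x ⬝ᵥ A *ᵥ x) (i : n) :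
    lam ≤ hA.eigenvalues i := by
  simpa [← eigenvalues_eq_dotProduct_mulVec, dotProduct_eigenvectorBasis_self] using
    hlow (hA.eigenvectorBasis i)

lemma eigenvalues_le {Lam : ℝ} (hhigh : ∀ x : n → ℝ, x ⬝ᵥ A *ᵥ x ≤ Lam * (x ⬝ᵥ x)) (i : n) :
    hA.eigenvalues i ≤ Lam := by
  simpa [← eigenvalues_eq_dotProduct_mulVec, dotProduct_eigenvectorBasis_self] using
    hhigh (hA.eigenvectorBasis i)

end Matrix.IsHermitian

lemma Matrix.IsSymm.sum_sq_eq_trace_sq_sub_two_mul_det {A : Matrix (Fin 2) (Fin 2) ℝ}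
    (hA : A.IsSymm) :
    ∑ j, ∑ k, A j k ^ 2 = A.trace ^ 2 - 2 * A.det := by
  have h10 : A 1 0 = A 0 1 := hA.apply 0 1
  simp only [Fin.sum_univ_two, trace_fin_two, det_fin_two, h10]
  ring

section CordesParam

open Set

noncomputable def cordesParam (lam Lam : ℝ) : ℝ := 2 * lam * Lam / (lam ^ 2 + Lam ^ 2)

variable {lam Lam : ℝ}

lemma cordesParam_pos (hlam : 0 < lam) (hLam : 0 < Lam) : 0 < cordesParam lam Lam := by
  unfold cordesParam; positivity

lemma cordesParam_le_one (lam Lam : ℝ) : cordesParam lam Lam ≤ 1 :=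
  div_le_one_of_le₀ (by nlinarith [sq_nonneg (lam - Lam)]) (by positivity)

lemma one_add_cordesParam (hlam : 0 < lam) :
    1 + cordesParam lam Lam = (lam + Lam) ^ 2 / (lam ^ 2 + Lam ^ 2) := by
  unfold cordesParam
  field_simp
  ring

lemma sq_add_sq_le_div_one_add_cordesParam {μ ν : ℝ} (hlam : 0 < lam) (hμ : μ ∈ Icc lam Lam)
    (hν : ν ∈ Icc lam Lam) : μ ^ 2 + ν ^ 2 ≤ (μ + ν) ^ 2 / (1 + cordesParam lam Lam) := by
  obtain ⟨hlam_μ, hμ_Lam⟩ := hμ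
  obtain ⟨hlam_ν, hν_Lam⟩ := hν
  have key : (μ * lam - ν * Lam) * (μ * Lam - ν * lam) ≤ 0 :=
    mul_nonpos_of_nonpos_of_nonneg (by nlinarith) (by nlinarith)
  have hLam : 0 < Lam := by linarith
  rw [one_add_cordesParam hlam, div_div_eq_mul_div, le_div_iff₀ (by positivity)]
  nlinarith

end CordesParam

theorem statement10_general
    (A : Matrix (Fin 2) (Fin 2) ℝ) (hA : A.IsSymm)
    (lam Lam : ℝ) (hlam : 0 < lam)
    (hlow : ∀ x : Fin 2 → ℝ, lam * (x ⬝ᵥ x) ≤ x ⬝ᵥ A.mulVec x)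
    (hhigh : ∀ x : Fin 2 → ℝ, x ⬝ᵥ A.mulVec x ≤ Lam * (x ⬝ᵥ x)) :
    0 < 2 * lam * Lam / (lam ^ 2 + Lam ^ 2) ∧
    2 * lam * Lam / (lam ^ 2 + Lam ^ 2) ≤ 1 ∧
    (∑ j : Fin 2, ∑ k : Fin 2, A j k ^ 2) ≤
      A.trace ^ 2 / (1 + 2 * lam * Lam / (lam ^ 2 + Lam ^ 2)) := by
  have hH : A.IsHermitian := isHermitian_iff_isSymm.mpr hA
  set μ := hH.eigenvalues
  have hμ (i : Fin 2) : μ i ∈ Set.Icc lam Lam :=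
    ⟨hH.le_eigenvalues hlow i, hH.eigenvalues_le hhigh i⟩
  have hLam : 0 < Lam := hlam.trans_le ((hμ 0).1.trans (hμ 0).2)
  have htrace : A.trace = μ 0 + μ 1 := by simp [hH.trace_eq_sum_eigenvalues, Fin.sum_univ_two, μ]
  have hdet : A.det = μ 0 * μ 1 := by simp [hH.det_eq_prod_eigenvalues, Fin.prod_univ_two, μ]
  have hfrob : ∑ j, ∑ k, A j k ^ 2 = μ 0 ^ 2 + μ 1 ^ 2 := by
    rw [hA.sum_sq_eq_trace_sq_sub_two_mul_det, htrace, hdet]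
    ring
  refine ⟨cordesParam_pos hlam hLam, cordesParam_le_one lam Lam, ?_⟩
  rw [hfrob, htrace]
  exact sq_add_sq_le_div_one_add_cordesParam hlam (hμ 0) (hμ 1)

/-- uniform ellipticity implies the Cordes condition in two
dimensions, with `ε = 2λΛ/(λ² + Λ²)`. -/
theorem statement10
    (A : Matrix (Fin 2) (Fin 2) ℝ) (hA : A.IsSymm)
    (lam Lam : ℝ) (hlam : 0 < lam) (hlamLam : lam ≤ Lam)
    (hlow : ∀ x : Fin 2 → ℝ, lam * (x ⬝ᵥ x) ≤ x ⬝ᵥ A.mulVec x)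
    (hhigh : ∀ x : Fin 2 → ℝ, x ⬝ᵥ A.mulVec x ≤ Lam * (x ⬝ᵥ x)) :
    0 < 2 * lam * Lam / (lam ^ 2 + Lam ^ 2) ∧
    2 * lam * Lam / (lam ^ 2 + Lam ^ 2) ≤ 1 ∧
    (∑ j : Fin 2, ∑ k : Fin 2, A j k ^ 2) ≤
      A.trace ^ 2 / (1 + 2 * lam * Lam / (lam ^ 2 + Lam ^ 2)) :=
  statement10_general A hA lam Lam hlam hlow hhigh
end

section
/- (Cordes condition bounds the distance of the scaled matrix to the identity.) Let d ≥ 1, let A be a real symmetric d×d matrix with tr A > 0, let ε ∈ (0,1], and assume A satisfies the Cordes condition with parameter ε, i.e. ‖A‖_F² ≤ (tr A)²/(d−1+ε). Set γ := tr A/‖A‖_F². Then ‖γA − I_d‖_F² ≤ 1 − ε, where I_d is the d×d identity matrix. -/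
/-!
Write `S = ∑ⱼₖ Aⱼₖ²` and `t = tr A`. Expanding the square gives
`‖γA - I‖_F² = γ²S - 2γt + d`, which for `γ = t / S` equals `d - t² / S`.
The Cordes condition says exactly that `t² / S ≥ d - 1 + ε`.
-/

open Matrix
open scoped BigOperators

namespace Matrix

variable {n R : Type*} [Fintype n]

theorem sum_sum_sq_smul_sub_one [DecidableEq n] [CommRing R] (c : R) (A : Matrix n n R) :
    ∑ j, ∑ k, (c • A - 1) j k ^ 2 =
      c ^ 2 * ∑ j, ∑ k, A j k ^ 2 - 2 * c * A.trace + Fintype.card n := by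
  have hrow : ∀ j, ∑ k, (c • A - 1) j k ^ 2 = c ^ 2 * ∑ k, A j k ^ 2 - 2 * c * A j j + 1 := by
    intro j
    simp only [sub_apply, smul_apply, smul_eq_mul, one_apply, sub_sq, ite_pow, one_pow,
      zero_pow two_ne_zero, mul_ite, mul_one, mul_zero, Finset.sum_add_distrib,
      Finset.sum_sub_distrib, Finset.sum_ite_eq, Finset.mem_univ, if_true, mul_pow,
      Finset.mul_sum]
    ring
  simp only [hrow, Finset.sum_add_distrib, Finset.sum_sub_distrib, ← Finset.mul_sum, trace,
    diag, Finset.sum_const, Finset.card_univ, nsmul_eq_mul, mul_one]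

theorem sum_sum_sq_pos_of_trace_ne_zero [Field R] [LinearOrder R] [IsStrictOrderedRing R]
    {A : Matrix n n R} (h : A.trace ≠ 0) : 0 < ∑ j, ∑ k, A j k ^ 2 := by
  refine lt_of_le_of_ne (by positivity) fun hzero => h ?_
  have hA : ∀ j k, A j k = 0 := fun j k => by
    have hrow := (Finset.sum_eq_zero_iff_of_nonneg fun j _ => by positivity).mp hzero.symm j
      (Finset.mem_univ j)
    exact pow_eq_zero_iff two_ne_zero |>.mp
      ((Finset.sum_eq_zero_iff_of_nonneg fun k _ => sq_nonneg (A j k)).mp hrow k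
        (Finset.mem_univ k))
  simp [trace, hA]

end Matrix

theorem statement11_general
    (d : ℕ)
    (A : Matrix (Fin d) (Fin d) ℝ) (htr : 0 < A.trace)
    (ε : ℝ)
    (hCordes : (∑ j : Fin d, ∑ k : Fin d, A j k ^ 2) ≤
      A.trace ^ 2 / ((d : ℝ) - 1 + ε))
    (γ : ℝ) (hγ : γ = A.trace / ∑ j : Fin d, ∑ k : Fin d, A j k ^ 2) :
    (∑ j : Fin d, ∑ k : Fin d, (γ • A - 1) j k ^ 2) ≤ 1 - ε := by
  set S := ∑ j : Fin d, ∑ k : Fin d, A j k ^ 2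
  have hS : 0 < S := sum_sum_sq_pos_of_trace_ne_zero htr.ne'
  have hden : 0 < (d : ℝ) - 1 + ε :=
    (div_pos_iff_of_pos_left (by positivity)).mp (hS.trans_le hCordes)
  have hquot : (d : ℝ) - 1 + ε ≤ A.trace ^ 2 / S := by
    rw [le_div_iff₀ hS, mul_comm]
    exact (le_div_iff₀ hden).mp hCordes
  have hexpand : ∑ j, ∑ k, (γ • A - 1) j k ^ 2 = d - A.trace ^ 2 / S := by
    rw [sum_sum_sq_smul_sub_one, hγ, Fintype.card_fin]
    field_simp
    ring
  linarith

/-- the Cordes condition bounds the Frobenius distance of the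
scaled matrix `γA` to the identity by `1 - ε`. -/
theorem statement11
    (d : ℕ) (hd : 1 ≤ d)
    (A : Matrix (Fin d) (Fin d) ℝ) (hA : A.IsSymm) (htr : 0 < A.trace)
    (ε : ℝ) (hε0 : 0 < ε) (hε1 : ε ≤ 1)
    (hCordes : (∑ j : Fin d, ∑ k : Fin d, A j k ^ 2) ≤
      A.trace ^ 2 / ((d : ℝ) - 1 + ε))
    (γ : ℝ) (hγ : γ = A.trace / ∑ j : Fin d, ∑ k : Fin d, A j k ^ 2) :
    (∑ j : Fin d, ∑ k : Fin d, (γ • A - 1) j k ^ 2) ≤ 1 - ε :=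
  statement11_general d A htr ε hCordes γ hγ
end

section
/- (The discrete DPG system is symmetric and positive definite.) Assume b satisfies the inf-sup condition with constant γ > 0 and that there is a Fortin operator Π_F : V → V_h with constant C_F for the subspace U_h. Then the bilinear form a_h(u_h, w_h) := b(u_h, Θ_h w_h) on U_h satisfies a_h(u_h, w_h) = ⟨Θ_h u_h, Θ_h w_h⟩_V for all u_h, w_h ∈ U_h; in particular a_h is symmetric, and it is positive definite with a_h(u_h, u_h) ≥ (γ/C_F)²·‖u_h‖_U² for all u_h ∈ U_h. -/
/-!
The DPG form is `a_h(u, w) = b(u, Θ_h w) = ⟪Θ_h u, Θ_h w⟫`, because `Θ_h w ∈ V_h` is an admissible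
test function in the definition of `Θ_h u`; symmetry is then that of the inner product. For
coercivity, the Fortin property lets every test function `v` be replaced by `Π_F v ∈ V_h`:
`b(u, v) = b(u, Π_F v) = ⟪Θ_h u, Π_F v⟫ ≤ C_F ‖Θ_h u‖ ‖v‖`, so the inf-sup condition gives
`γ ‖u‖ ≤ C_F ‖Θ_h u‖`, and squaring yields `(γ / C_F)² ‖u‖² ≤ ‖Θ_h u‖² = a_h(u, u)`.
-/

open scoped InnerProductSpace

lemma iSup_div_norm_le {V : Type*} [NormedAddCommGroup V] {f : V → ℝ} {c : ℝ} (hc : 0 ≤ c)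
    (hf : ∀ v, f v ≤ c * ‖v‖) : ⨆ v : {v : V // v ≠ 0}, f v.1 / ‖v.1‖ ≤ c :=
  Real.iSup_le (fun v => (div_le_iff₀ (norm_pos_iff.mpr v.2)).mpr (hf v.1)) hc

lemma le_mul_norm_of_fortin {V : Type*} [NormedAddCommGroup V] [InnerProductSpace ℝ V]
    {Vh : Submodule ℝ V} {P : V → V} {C : ℝ}
    (hPmem : ∀ v, P v ∈ Vh) (hPbdd : ∀ v, ‖P v‖ ≤ C * ‖v‖)
    {ℓ : V → ℝ} (hℓP : ∀ v, ℓ (P v) = ℓ v)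
    {θ : V} (hθ : ∀ vh ∈ Vh, ⟪θ, vh⟫_ℝ = ℓ vh) (v : V) :
    ℓ v ≤ C * ‖θ‖ * ‖v‖ :=
  calc ℓ v = ⟪θ, P v⟫_ℝ := by rw [hθ _ (hPmem v), hℓP]
    _ ≤ ‖θ‖ * ‖P v‖ := real_inner_le_norm _ _
    _ ≤ ‖θ‖ * (C * ‖v‖) := mul_le_mul_of_nonneg_left (hPbdd v) (norm_nonneg _)
    _ = C * ‖θ‖ * ‖v‖ := by ring

lemma sq_div_mul_sq_le_sq_of_mul_le_mul {γ C x y : ℝ} (hγ : 0 ≤ γ) (hC : 0 < C) (hx : 0 ≤ x)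
    (h : γ * x ≤ C * y) : (γ / C) ^ 2 * x ^ 2 ≤ y ^ 2 := by
  have hle : γ / C * x ≤ y := by
    rw [div_mul_eq_mul_div, div_le_iff₀ hC]
    linarith
  rw [← mul_pow]
  exact pow_le_pow_left₀ (by positivity) hle 2

theorem statement14_general
    {U V : Type*} [NormedAddCommGroup U] [InnerProductSpace ℝ U]
    [NormedAddCommGroup V] [InnerProductSpace ℝ V]
    (b : U →L[ℝ] V →L[ℝ] ℝ) (γ : ℝ)
    (hγ : 0 < γ)
    (hinfsup : ∀ u : U, γ * ‖u‖ ≤ ⨆ v : {v : V // v ≠ 0}, b u v.1 / ‖v.1‖)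
    (Uh : Submodule ℝ U) (Vh : Submodule ℝ V)
    (PiF : V →ₗ[ℝ] V) (hPiFmem : ∀ v : V, PiF v ∈ Vh)
    (CF : ℝ) (hCF : 0 < CF)
    (hPiFbdd : ∀ v : V, ‖PiF v‖ ≤ CF * ‖v‖)
    (hFortin : ∀ uh ∈ Uh, ∀ v : V, b uh (PiF v) = b uh v)
    (Θh : Uh → V) (hΘhmem : ∀ uh : Uh, Θh uh ∈ Vh)
    (hΘh : ∀ (uh : Uh), ∀ vh ∈ Vh, ⟪Θh uh, vh⟫_ℝ = b uh vh) :
    (∀ uh wh : Uh, b uh (Θh wh) = ⟪Θh uh, Θh wh⟫_ℝ) ∧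
    (∀ uh wh : Uh, b uh (Θh wh) = b wh (Θh uh)) ∧
    (∀ uh : Uh, (γ / CF) ^ 2 * ‖(uh : U)‖ ^ 2 ≤ b uh (Θh uh)) := by
  have hinner : ∀ uh wh : Uh, b uh (Θh wh) = ⟪Θh uh, Θh wh⟫_ℝ := fun uh wh =>
    (hΘh uh _ (hΘhmem wh)).symm
  refine ⟨hinner, fun uh wh => by rw [hinner, hinner, real_inner_comm], fun uh => ?_⟩
  have hΘbound : γ * ‖(uh : U)‖ ≤ CF * ‖Θh uh‖ :=
    (hinfsup uh).trans <| iSup_div_norm_le (by positivity)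
      (le_mul_norm_of_fortin hPiFmem hPiFbdd (hFortin uh uh.2) (hΘh uh))
  calc (γ / CF) ^ 2 * ‖(uh : U)‖ ^ 2 ≤ ‖Θh uh‖ ^ 2 :=
        sq_div_mul_sq_le_sq_of_mul_le_mul hγ.le hCF (norm_nonneg _) hΘbound
    _ = b uh (Θh uh) := by rw [hinner, real_inner_self_eq_norm_sq]

/-- the discrete DPG system is symmetric and positive definite. -/
theorem statement14
    {U V : Type*} [NormedAddCommGroup U] [InnerProductSpace ℝ U] [CompleteSpace U]
    [NormedAddCommGroup V] [InnerProductSpace ℝ V] [CompleteSpace V]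
    (b : U →L[ℝ] V →L[ℝ] ℝ) (M γ : ℝ)
    (hM : ∀ (u : U) (v : V), |b u v| ≤ M * ‖u‖ * ‖v‖)
    (hγ : 0 < γ)
    (hinfsup : ∀ u : U, γ * ‖u‖ ≤ ⨆ v : {v : V // v ≠ 0}, b u v.1 / ‖v.1‖)
    (Uh : Submodule ℝ U) (Vh : Submodule ℝ V) (hVh : IsClosed (Vh : Set V))
    (PiF : V →ₗ[ℝ] V) (hPiFmem : ∀ v : V, PiF v ∈ Vh)
    (CF : ℝ) (hCF : 0 < CF)
    (hPiFbdd : ∀ v : V, ‖PiF v‖ ≤ CF * ‖v‖)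
    (hFortin : ∀ uh ∈ Uh, ∀ v : V, b uh (PiF v) = b uh v)
    (Θh : Uh → V) (hΘhmem : ∀ uh : Uh, Θh uh ∈ Vh)
    (hΘh : ∀ (uh : Uh), ∀ vh ∈ Vh, ⟪Θh uh, vh⟫_ℝ = b uh vh) :
    (∀ uh wh : Uh, b uh (Θh wh) = ⟪Θh uh, Θh wh⟫_ℝ) ∧
    (∀ uh wh : Uh, b uh (Θh wh) = b wh (Θh uh)) ∧
    (∀ uh : Uh, (γ / CF) ^ 2 * ‖(uh : U)‖ ^ 2 ≤ b uh (Θh uh)) :=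
  statement14_general b γ hγ hinfsup Uh Vh PiF hPiFmem CF hCF hPiFbdd hFortin Θh hΘhmem hΘh
end

section
/- (Equivalence of the DPG and least-squares residual estimators.) Let V = V₁ × V₂ with ‖(v₁,v₂)‖_V² = ‖v₁‖² + ‖v₂‖², let T : U → V₁ be a bounded linear operator, c : U × V₂ → ℝ a bounded bilinear form, and b(u,(v₁,v₂)) := ⟨Tu, v₁⟩_{V₁} + c(u, v₂). Let W_h ⊆ V₁ and Q_h ⊆ V₂ be subspaces, V_h := W_h × Q_h, fix g ∈ V₁, and define F(v₁,v₂) := ⟨g, v₁⟩_{V₁}. For any u_h ∈ U, define the DPG residual ‖F − Bu_h‖_{V_h'} := sup_{0≠(w,q)∈V_h} |F(w,q) − b(u_h,(w,q))|/‖(w,q)‖_V and the least-squares residual ‖Cu_h‖_{Q_h'} := sup_{0≠q∈Q_h} |c(u_h, q)|/‖q‖. Then ‖Cu_h‖_{Q_h'} ≤ ‖F − Bu_h‖_{V_h'} ≤ ‖Cu_h‖_{Q_h'} + ‖g − T u_h‖_{V₁}. -/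
/-!
Substituting `F` and `b`, the DPG residual at `v = (w, q)` is `⟪g - T u_h, w⟫ - c(u_h, q)`.
Testing with `v = (0, q)` recovers the least-squares ratio exactly, which gives the lower bound.
For the upper bound, Cauchy–Schwarz bounds the first term by `‖g - T u_h‖ ‖w‖` and the definition
of `‖C u_h‖_{Q_h'}` bounds the second by `‖C u_h‖_{Q_h'} ‖q‖`; both `‖w‖` and `‖q‖` are at most `‖v‖`.
-/

open scoped InnerProductSpace

lemma abs_le_iSup_abs_div_norm_mul_norm {E : Type*} [NormedAddCommGroup E] [NormedSpace ℝ E]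
    (f : E →L[ℝ] ℝ) (P : E → Prop) {x : E} (hx : P x) :
    |f x| ≤ (⨆ y : {y : E // P y ∧ y ≠ 0}, |f y| / ‖y.1‖) * ‖x‖ := by
  have hbdd : BddAbove (Set.range fun y : {y : E // P y ∧ y ≠ 0} => |f y| / ‖y.1‖) := by
    refine ⟨‖f‖, ?_⟩
    rintro _ ⟨y, rfl⟩
    simpa only [Real.norm_eq_abs] using f.ratio_le_opNorm y.1
  rcases eq_or_ne x 0 with rfl | hx0
  · simp
  · rw [← div_le_iff₀ (norm_pos_iff.mpr hx0)]
    exact le_ciSup hbdd ⟨x, hx, hx0⟩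

lemma abs_inner_fst_sub_le {V₁ V₂ : Type*} [NormedAddCommGroup V₁] [InnerProductSpace ℝ V₁]
    [NormedAddCommGroup V₂] (r : V₁) (ℓ : V₂ → ℝ) {η : ℝ} (hη : 0 ≤ η)
    (v : WithLp 2 (V₁ × V₂)) (hℓ : |ℓ v.snd| ≤ η * ‖v.snd‖) :
    |⟪r, v.fst⟫_ℝ - ℓ v.snd| ≤ (η + ‖r‖) * ‖v‖ :=
  calc |⟪r, v.fst⟫_ℝ - ℓ v.snd|
      ≤ |⟪r, v.fst⟫_ℝ| + |ℓ v.snd| := abs_sub _ _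
    _ ≤ ‖r‖ * ‖v.fst‖ + η * ‖v.snd‖ := add_le_add (abs_real_inner_le_norm _ _) hℓ
    _ ≤ ‖r‖ * ‖v‖ + η * ‖v‖ := by
        gcongr
        exacts [WithLp.norm_fst_le _ v, WithLp.norm_snd_le _ v]
    _ = (η + ‖r‖) * ‖v‖ := by ring

theorem statement15_general
    {U V₁ V₂ : Type*} [NormedAddCommGroup U] [InnerProductSpace ℝ U]
    [NormedAddCommGroup V₁] [InnerProductSpace ℝ V₁]
    [NormedAddCommGroup V₂] [InnerProductSpace ℝ V₂]
    (T : U →L[ℝ] V₁) (c : U →L[ℝ] V₂ →L[ℝ] ℝ)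
    (b : U → WithLp 2 (V₁ × V₂) → ℝ)
    (hb : ∀ (u : U) (v : WithLp 2 (V₁ × V₂)),
      b u v = ⟪T u, (WithLp.equiv 2 (V₁ × V₂) v).1⟫_ℝ
        + c u (WithLp.equiv 2 (V₁ × V₂) v).2)
    (Wh : Submodule ℝ V₁) (Qh : Submodule ℝ V₂)
    (g : V₁) (F : WithLp 2 (V₁ × V₂) → ℝ)
    (hF : ∀ v : WithLp 2 (V₁ × V₂), F v = ⟪g, (WithLp.equiv 2 (V₁ × V₂) v).1⟫_ℝ)
    (uh : U) (ηdpg ηls : ℝ)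
    (hηdpg : ηdpg = ⨆ p : {p : V₁ × V₂ // p.1 ∈ Wh ∧ p.2 ∈ Qh ∧ p ≠ 0},
      |F ((WithLp.equiv 2 (V₁ × V₂)).symm p.1) -
        b uh ((WithLp.equiv 2 (V₁ × V₂)).symm p.1)| /
          ‖(WithLp.equiv 2 (V₁ × V₂)).symm p.1‖)
    (hηls : ηls = ⨆ q : {q : V₂ // q ∈ Qh ∧ q ≠ 0}, |c uh q.1| / ‖q.1‖) :
    ηls ≤ ηdpg ∧ ηdpg ≤ ηls + ‖g - T uh‖ := by
  have residual (v : WithLp 2 (V₁ × V₂)) :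
      F v - b uh v = ⟪g - T uh, v.fst⟫_ℝ - c uh v.snd := by
    rw [hF, hb, inner_sub_left]
    simp only [WithLp.equiv_apply, WithLp.ofLp_fst, WithLp.ofLp_snd]
    ring
  have hηls0 : 0 ≤ ηls := hηls ▸ Real.iSup_nonneg fun q => by positivity
  have ratio_le (p : {p : V₁ × V₂ // p.1 ∈ Wh ∧ p.2 ∈ Qh ∧ p ≠ 0}) :
      |F (WithLp.toLp 2 p.1) - b uh (WithLp.toLp 2 p.1)| / ‖WithLp.toLp 2 p.1‖
        ≤ ηls + ‖g - T uh‖ := by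
    refine div_le_of_le_mul₀ (norm_nonneg _) (by positivity) ?_
    rw [residual]
    refine abs_inner_fst_sub_le _ _ hηls0 _ ?_
    exact hηls ▸ abs_le_iSup_abs_div_norm_mul_norm (c uh) (· ∈ Qh) p.2.2.1
  simp only [WithLp.equiv_symm_apply] at hηdpg
  subst hηdpg
  refine ⟨?_, Real.iSup_le ratio_le (by positivity)⟩
  refine hηls ▸ Real.iSup_le (fun q => ?_) (Real.iSup_nonneg fun p => by positivity)
  refine le_ciSup_of_le ⟨_, Set.forall_mem_range.mpr ratio_le⟩
    ⟨(0, q.1), Wh.zero_mem, q.2.1, by simp [q.2.2]⟩ (le_of_eq ?_)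
  rw [residual]
  simp [WithLp.norm_toLp_snd]

/-- equivalence of the DPG residual and the least-squares
residual estimators: `‖Cu_h‖_{Q_h'} ≤ ‖F − Bu_h‖_{V_h'} ≤ ‖Cu_h‖_{Q_h'} + ‖g − Tu_h‖`. -/
theorem statement15
    {U V₁ V₂ : Type*} [NormedAddCommGroup U] [InnerProductSpace ℝ U] [CompleteSpace U]
    [NormedAddCommGroup V₁] [InnerProductSpace ℝ V₁] [CompleteSpace V₁]
    [NormedAddCommGroup V₂] [InnerProductSpace ℝ V₂] [CompleteSpace V₂]
    (T : U →L[ℝ] V₁) (c : U →L[ℝ] V₂ →L[ℝ] ℝ)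
    (b : U → WithLp 2 (V₁ × V₂) → ℝ)
    (hb : ∀ (u : U) (v : WithLp 2 (V₁ × V₂)),
      b u v = ⟪T u, (WithLp.equiv 2 (V₁ × V₂) v).1⟫_ℝ
        + c u (WithLp.equiv 2 (V₁ × V₂) v).2)
    (Wh : Submodule ℝ V₁) (Qh : Submodule ℝ V₂)
    (g : V₁) (F : WithLp 2 (V₁ × V₂) → ℝ)
    (hF : ∀ v : WithLp 2 (V₁ × V₂), F v = ⟪g, (WithLp.equiv 2 (V₁ × V₂) v).1⟫_ℝ)
    (uh : U) (ηdpg ηls : ℝ)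
    (hηdpg : ηdpg = ⨆ p : {p : V₁ × V₂ // p.1 ∈ Wh ∧ p.2 ∈ Qh ∧ p ≠ 0},
      |F ((WithLp.equiv 2 (V₁ × V₂)).symm p.1) -
        b uh ((WithLp.equiv 2 (V₁ × V₂)).symm p.1)| /
          ‖(WithLp.equiv 2 (V₁ × V₂)).symm p.1‖)
    (hηls : ηls = ⨆ q : {q : V₂ // q ∈ Qh ∧ q ≠ 0}, |c uh q.1| / ‖q.1‖) :
    ηls ≤ ηdpg ∧ ηdpg ≤ ηls + ‖g - T uh‖ :=
  statement15_general T c b hb Wh Qh g F hF uh ηdpg ηls hηdpg hηls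
end
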